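/- arXiv:math/0006131 — 3 statements merged into one kernel-verified Lean document; each statement's English description precedes it below -/
import Mathlib

section
/- Let L be a finite rank-connected lattice in which every rank set R_i with 0 < i < r(⊤) contains at least two elements. If x is a doubly irreducible element of L, with unique lower cover z (the unique element covered by x) and unique upper cover y (the unique element covering x), then neither y nor z is doubly irreducible in L. -/
/-! Common definitions: finite lattices, rank functions, rank-connectivity,
interval-connectivity, dismantlability, lexicographic shellability. -/

section Defs

variable (L : Type*) [Lattice L]

/-- `r` is a rank function for the bounded lattice `L`: `r ⊥ = 0` and `r`
increases by exactly one along covering relations.  For a finite lattice this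
is equivalent to all maximal chains from `⊥` to `⊤` having the same length,
and then `r x` is the length of any maximal chain from `⊥` to `x`. -/
def IsRankFunction [OrderBot L] (r : L → ℕ) : Prop :=
  r ⊥ = 0 ∧ ∀ a b : L, a ⋖ b → r b = r a + 1

/-- The Hasse diagram of `L` restricted to a set `S`: the (simple) graph on `S`
whose edges are the covering relations of `L` between elements of `S`. -/
def hasseGraph (S : Set L) : SimpleGraph S where
  Adj a b := ((a : L) ⋖ (b : L)) ∨ ((b : L) ⋖ (a : L))
  symm := ⟨fun a b h => Or.symm h⟩
  loopless := ⟨fun a h => by rcases h with h | h <;> exact h.ne rfl⟩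

/-- `L` is rank-connected: it is ranked, and for each `i < r ⊤` the bipartite
graph on the elements of ranks `i` and `i + 1`, with the covering relations as
edges, is connected. -/
def RankConnected [BoundedOrder L] : Prop :=
  ∃ r : L → ℕ, IsRankFunction L r ∧
    ∀ i : ℕ, i < r (⊤ : L) →
      (hasseGraph L {x : L | r x = i ∨ r x = i + 1}).Connected

/-- `L` is interval-connected: it is ranked, and for every pair `x ≤ y` with
`r y ≥ r x + 2` the Hasse diagram of the open interval `(x, y)` (edges being
the covering relations of `L` between its elements) is connected. -/
def IntervalConnected [BoundedOrder L] : Prop :=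
  ∃ r : L → ℕ, IsRankFunction L r ∧
    ∀ x y : L, x ≤ y → r x + 2 ≤ r y →
      (hasseGraph L {z : L | x < z ∧ z < y}).Connected

/-- A finite lattice `L` with `n` elements is dismantlable if there is a chain
`L₁ ⊆ L₂ ⊆ ⋯ ⊆ Lₙ = L` of sublattices of `L` with `|Lᵢ| = i`. -/
def Dismantlable : Prop :=
  ∃ C : ℕ → Set L,
    (∀ i : ℕ, 1 ≤ i → i ≤ Nat.card L → IsSublattice (C i) ∧ (C i).ncard = i) ∧
    (∀ i j : ℕ, i ≤ j → C i ⊆ C j) ∧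
    C (Nat.card L) = Set.univ

variable {L}

/-- `l` is an unrefinable (i.e. saturated) chain which is rising with respect
to the edge labelling `f`: consecutive entries are covering pairs and the
labels of consecutive covering pairs weakly increase. -/
def RisingChain (f : L → L → ℝ) (l : List L) : Prop :=
  l.Chain' (· ⋖ ·) ∧
    (l.zip l.tail).Chain' (fun p q => f p.1 p.2 ≤ f q.1 q.2)

/-- `f` (viewed as a labelling of the covering relations of `L` by reals) is an
L-labelling witnessing lexicographic shellability of the interval `[a, b]`:
(1) every subinterval `[x, y]` has a unique rising unrefinable chain from `x`
to `y`, and (2) the rising chain lexicographically precedes all others: if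
`z ∈ [x, y]` covers `x` and `z` is not the second element `x₁` of the rising
chain, then `f x x₁ < f x z`. -/
def IsLexShellingOn (a b : L) (f : L → L → ℝ) : Prop :=
  (∀ x y : L, a ≤ x → x ≤ y → y ≤ b →
      ∃! l : List L,
        l.head? = some x ∧ l.getLast? = some y ∧ RisingChain f l) ∧
  (∀ x y : L, a ≤ x → x ≤ y → y ≤ b →
      ∀ l : List L, l.head? = some x → l.getLast? = some y → RisingChain f l →
        ∀ x₁ : L, l[1]? = some x₁ →
          ∀ z : L, x ⋖ z → z ≤ y → z ≠ x₁ → f x x₁ < f x z)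

variable (L)

/-- `L` is lexicographically shellable. -/
def LexShellable [BoundedOrder L] : Prop :=
  ∃ f : L → L → ℝ, IsLexShellingOn (⊥ : L) (⊤ : L) f

variable {L}

/-- `x` is join-irreducible: it covers exactly one element. -/
def JoinIrred (x : L) : Prop := ∃! z : L, z ⋖ x

/-- `x` is meet-irreducible: it is covered by exactly one element. -/
def MeetIrred (x : L) : Prop := ∃! y : L, x ⋖ y

/-- `x` is doubly irreducible: both join- and meet-irreducible. -/
def DoublyIrred (x : L) : Prop := JoinIrred x ∧ MeetIrred x

/-- `w` is a corner of `x`: `x` is doubly irreducible and there are `z`, `y`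
such that `x` and `w` both cover `z` and are both covered by `y`. -/
def IsCornerOf (w x : L) : Prop :=
  DoublyIrred x ∧ w ≠ x ∧ ∃ z y : L, z ⋖ x ∧ z ⋖ w ∧ x ⋖ y ∧ w ⋖ y

end Defs


/-!
A covering pair `a ⋖ b` with `a` meet-irreducible and `b` join-irreducible is an isolated edge of
the Hasse graph between ranks `r a` and `r a + 1`. If that graph is connected, the two ranks are
therefore `{a}` and `{b}`. For a doubly irreducible `x` with `z ⋖ x ⋖ y`, a join-irreducible `y`
(resp. a meet-irreducible `z`) would thus make `x` the only element of its rank, although that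
rank is intermediate and so has at least two elements.
-/

theorem SimpleGraph.Reachable.mem_of_adj_closed {V : Type*} {G : SimpleGraph V} {s : Set V}
    (hs : ∀ u v, u ∈ s → G.Adj u v → v ∈ s) {u v : V} (h : G.Reachable u v) (hu : u ∈ s) :
    v ∈ s := by
  rw [SimpleGraph.reachable_iff_reflTransGen] at h
  induction h with
  | refl => exact hu
  | tail _ hadj ih => exact hs _ _ ih hadj

namespace IsRankFunction

variable {L : Type*} [Lattice L] [OrderBot L] {r : L → ℕ}

theorem strictMono [Finite L] (hr : IsRankFunction L r) : StrictMono r := by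
  classical
  have := Fintype.ofFinite L
  let _ : LocallyFiniteOrder L := Fintype.toLocallyFiniteOrder
  exact (strictMono_iff_forall_covBy r).2 fun a b hab => by rw [hr.2 a b hab]; omega

theorem eq_or_eq_of_covBy_of_connected (hr : IsRankFunction L r) {a b : L} (hab : a ⋖ b)
    (ha : MeetIrred a) (hb : JoinIrred b)
    (hconn : (hasseGraph L {v : L | r v = r a ∨ r v = r a + 1}).Connected)
    {w : L} (hw : r w = r a ∨ r w = r a + 1) : w = a ∨ w = b := by
  have hrb : r b = r a + 1 := hr.2 a b hab
  have hclosed : ∀ u v : {v : L | r v = r a ∨ r v = r a + 1}, u ∈ Subtype.val ⁻¹' {a, b} →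
      (hasseGraph L _).Adj u v → v ∈ Subtype.val ⁻¹' {a, b} := by
    rintro ⟨u, -⟩ ⟨v, hv⟩ (hu : u = a ∨ u = b) (huv : u ⋖ v ∨ v ⋖ u)
    rcases hu with rfl | rfl <;> rcases huv with huv | hvu
    · exact Or.inr (ha.unique huv hab)
    · have := hr.2 v u hvu
      rcases hv with hv | hv <;> omega
    · have := hr.2 u v huv
      rcases hv with hv | hv <;> omega
    · exact Or.inl (hb.unique hvu hab)
  exact (hconn.preconnected ⟨a, Or.inl rfl⟩ ⟨w, hw⟩).mem_of_adj_closed hclosed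
    (Or.inl rfl)

theorem setOf_eq_lower_eq_singleton (hr : IsRankFunction L r) {a b : L} (hab : a ⋖ b)
    (ha : MeetIrred a) (hb : JoinIrred b)
    (hconn : (hasseGraph L {v : L | r v = r a ∨ r v = r a + 1}).Connected) :
    {v : L | r v = r a} = {a} := by
  refine Set.eq_singleton_iff_unique_mem.2 ⟨rfl, fun w hw => ?_⟩
  refine (hr.eq_or_eq_of_covBy_of_connected hab ha hb hconn (Or.inl hw)).resolve_right ?_
  rintro rfl
  have := hr.2 a w hab
  simp only [Set.mem_ofPred_eq] at hw
  omega

theorem setOf_eq_upper_eq_singleton (hr : IsRankFunction L r) {a b : L} (hab : a ⋖ b)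
    (ha : MeetIrred a) (hb : JoinIrred b)
    (hconn : (hasseGraph L {v : L | r v = r a ∨ r v = r a + 1}).Connected) :
    {v : L | r v = r b} = {b} := by
  have hrb : r b = r a + 1 := hr.2 a b hab
  refine Set.eq_singleton_iff_unique_mem.2 ⟨rfl, fun w hw => ?_⟩
  simp only [Set.mem_ofPred_eq] at hw
  refine (hr.eq_or_eq_of_covBy_of_connected hab ha hb hconn (Or.inr (by omega))).resolve_left ?_
  rintro rfl
  omega

end IsRankFunction

/-- In a finite rank-connected lattice all of whose
intermediate rank sets have at least two elements, the unique lower cover and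
the unique upper cover of a doubly irreducible element are not themselves
doubly irreducible. -/
theorem covers_of_doublyIrred_not_doublyIrred
    (L : Type*) [Lattice L] [Finite L] [BoundedOrder L]
    (r : L → ℕ) (hr : IsRankFunction L r)
    (hconn : ∀ i : ℕ, i < r (⊤ : L) →
      (hasseGraph L {v : L | r v = i ∨ r v = i + 1}).Connected)
    (hbig : ∀ i : ℕ, 0 < i → i < r (⊤ : L) → 2 ≤ {v : L | r v = i}.ncard)
    (x z y : L) (hx : DoublyIrred x) (hz : z ⋖ x) (hy : x ⋖ y) :
    ¬ DoublyIrred y ∧ ¬ DoublyIrred z := by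
  have hrx : r x = r z + 1 := hr.2 z x hz
  have hxtop : r x < r ⊤ := hr.strictMono (hy.lt.trans_le le_top)
  have hrank_x : 2 ≤ {v : L | r v = r x}.ncard := hbig (r x) (by omega) hxtop
  constructor
  · rintro ⟨hyJ, -⟩
    rw [hr.setOf_eq_lower_eq_singleton hy hx.2 hyJ (hconn (r x) hxtop),
      Set.ncard_singleton] at hrank_x
    omega
  · rintro ⟨-, hzM⟩
    rw [hr.setOf_eq_upper_eq_singleton hz hzM hx.1 (hconn (r z) (by omega)),
      Set.ncard_singleton] at hrank_x
    omega
end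

section
/- Let L be a finite ranked lattice and suppose that for some i with 0 < i < r(⊤) the rank set R_i consists of a single element x. If both intervals [⊥, x] and [x, ⊤] (as lattices) are lexicographically shellable, then L is lexicographically shellable; indeed, any lexicographic shelling of [⊥, x] together with any lexicographic shelling of [x, ⊤] whose labels are all strictly greater than all labels used on [⊥, x] gives a lexicographic shelling of L. -/
/-! Since `x` is the only element of rank `i`, every element of `L` is comparable with `x`
(walk up or down a saturated chain until the rank reaches `i`). Hence no covering relation jumps
over `x`, and a saturated chain from below `x` to above `x` passes through `x`: it is a chain of
`[⊥, x]` followed by a chain of `[x, ⊤]`, and it is rising for the glued labelling exactly when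
both halves are, because the labels below `x` are smaller than those above. Existence,
uniqueness and lexicographic minimality of rising chains then come from the two halves; the
first step of a chain starting strictly below `x` stays below `x`. -/

section Rank

variable {L : Type*} [Lattice L] {r : L → ℕ}

lemma IsRankFunction.exists_rank_eq [OrderBot L] [Finite L] (hr : IsRankFunction L r) :
    ∀ n {a b : L}, a ≤ b → r a + n ≤ r b → ∃ c, a ≤ c ∧ c ≤ b ∧ r c = r a + n
  | 0, a, _, hab, _ => ⟨a, le_rfl, hab, rfl⟩
  | n + 1, a, b, hab, hn => by
    obtain ⟨c, hac, hcb⟩ := exists_covBy_le_of_lt (hab.lt_of_ne (by rintro rfl; omega))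
    obtain ⟨d, hcd, hdb, hd⟩ := hr.exists_rank_eq n hcb (by rw [hr.2 a c hac]; omega)
    exact ⟨d, hac.le.trans hcd, hdb, by rw [hd, hr.2 a c hac]; ring⟩

lemma IsRankFunction.forall_le_or_le [BoundedOrder L] [Finite L] (hr : IsRankFunction L r)
    {i : ℕ} {x : L} (hit : i ≤ r ⊤) (hx : {v | r v = i} = {x}) (v : L) : v ≤ x ∨ x ≤ v := by
  have hrank : ∀ c, r c = i → c = x := fun c hc => by
    rw [← Set.mem_singleton_iff, ← hx]
    exact hc
  rcases le_total (r v) i with hvi | hiv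
  · obtain ⟨c, hvc, -, hc⟩ := hr.exists_rank_eq (i - r v) (le_top : v ≤ ⊤) (by omega)
    exact .inl (hrank c (by omega) ▸ hvc)
  · obtain ⟨c, -, hcv, hc⟩ := hr.exists_rank_eq i (bot_le : ⊥ ≤ v) (by rw [hr.1]; omega)
    exact .inr (hrank c (by rw [hc, hr.1, zero_add]) ▸ hcv)

end Rank

section RisingChain

variable {L : Type*} [Lattice L] {f f' : L → L → ℝ} {a b u v w x : L} {l s t : List L}

lemma risingChain_iff :
    RisingChain f l ↔
      l.IsChain (· ⋖ ·) ∧ (l.zip l.tail).IsChain (fun p q => f p.1 p.2 ≤ f q.1 q.2) :=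
  Iff.rfl

@[simp] lemma risingChain_nil : RisingChain f ([] : List L) := ⟨.nil, .nil⟩

@[simp] lemma risingChain_singleton : RisingChain f [a] := ⟨.singleton a, .nil⟩

lemma risingChain_cons_cons :
    RisingChain f (a :: b :: l) ↔
      a ⋖ b ∧ (∀ c ∈ l.head?, f a b ≤ f b c) ∧ RisingChain f (b :: l) := by
  rcases l with _ | ⟨c, l⟩
  · simp [risingChain_iff]
  · simp only [risingChain_iff, List.isChain_cons_cons, List.tail_cons, List.zip_cons_cons,
      List.head?_cons, Option.mem_def, Option.some.injEq, forall_eq']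
    tauto

lemma risingChain_append_cons :
    RisingChain f (s ++ b :: t) ↔
      RisingChain f (s ++ [b]) ∧ RisingChain f (b :: t) ∧
        ∀ a ∈ s.getLast?, ∀ c ∈ t.head?, f a b ≤ f b c := by
  induction s with
  | nil => simp
  | cons a s ih =>
    cases s with
    | nil => simp [risingChain_cons_cons, and_comm]
    | cons a' s =>
      simp only [List.cons_append, risingChain_cons_cons] at ih ⊢
      rw [ih]
      simp only [List.head?_append, List.head?_cons, Option.or_some, Option.mem_def,
        Option.some.injEq, forall_eq', List.getLast?_cons_cons]
      tauto

lemma RisingChain.of_label_eq : ∀ {l : List L}, RisingChain f l →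
    (∀ p ∈ l, ∀ q ∈ l, p ⋖ q → f p q = f' p q) → RisingChain f' l
  | [], _, _ => risingChain_nil
  | [_], _, _ => risingChain_singleton
  | a :: b :: l, hl, hff' => by
    obtain ⟨hab, hhead, htail⟩ := risingChain_cons_cons.mp hl
    refine risingChain_cons_cons.mpr ⟨hab, fun c hc => ?_,
      htail.of_label_eq fun p hp q hq => hff' p (.tail _ hp) q (.tail _ hq)⟩
    have hc' : c ∈ a :: b :: l := by simp [List.mem_of_mem_head? hc]
    rw [← hff' a (by simp) b (by simp) hab, ← hff' b (by simp) c hc' (htail.1.rel_head? hc)]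
    exact hhead c hc

lemma RisingChain.mem_Icc (hl : RisingChain f l) (hu : l.head? = some u)
    (hv : l.getLast? = some v) (hw : w ∈ l) : w ∈ Set.Icc u v := by
  have hle : l.Pairwise (· ≤ ·) := List.isChain_iff_pairwise.mp (hl.1.imp fun _ _ h => h.le)
  obtain ⟨t, rfl⟩ := List.head?_eq_some_iff.mp hu
  obtain ⟨s, hs⟩ := List.getLast?_eq_some_iff.mp hv
  refine ⟨?_, ?_⟩
  · rcases List.mem_cons.mp hw with rfl | hw
    · rfl
    · exact List.rel_of_pairwise_cons hle hw
  · rw [hs] at hle hw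
    rcases List.mem_append.mp hw with hw | hw
    · exact (List.pairwise_append.mp hle).2.2 w hw v (by simp)
    · rw [List.mem_singleton.mp hw]

lemma RisingChain.of_label_eq_on_Icc (hl : RisingChain f l) (hu : l.head? = some u)
    (hv : l.getLast? = some v) (hff' : ∀ p q, u ≤ p → p ⋖ q → q ≤ v → f p q = f' p q) :
    RisingChain f' l :=
  hl.of_label_eq fun _ hp _ hq hpq => hff' _ _ (hl.mem_Icc hu hv hp).1 hpq (hl.mem_Icc hu hv hq).2

lemma CovBy.le_or_le_of_forall_le_or_le (hx : ∀ w, w ≤ x ∨ x ≤ w) (hab : a ⋖ b) :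
    b ≤ x ∨ x ≤ a := by
  rcases hx b with hb | hb
  · exact .inl hb
  rcases hx a with ha | ha
  · rcases hab.eq_or_eq ha hb with rfl | rfl
    · exact .inr le_rfl
    · exact .inl le_rfl
  · exact .inr ha

lemma List.IsChain.mem_of_forall_le_or_le (hx : ∀ w, w ≤ x ∨ x ≤ w) :
    ∀ {l : List L} {u v : L}, l.IsChain (· ⋖ ·) → l.head? = some u → l.getLast? = some v →
      u ≤ x → x ≤ v → x ∈ l
  | [a], u, v, _, hu, hv, hux, hxv => by
    simp only [List.head?_cons, List.getLast?_singleton, Option.some.injEq] at hu hv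
    subst hu hv
    simp [le_antisymm hux hxv]
  | a :: b :: l, u, v, hl, hu, hv, hux, hxv => by
    obtain rfl : a = u := by simpa using hu
    obtain ⟨hab, hl⟩ := List.isChain_cons_cons.mp hl
    rcases hab.le_or_le_of_forall_le_or_le hx with hbx | hxa
    · exact .tail _ (hl.mem_of_forall_le_or_le hx rfl (by simpa using hv) hbx hxv)
    · simp [le_antisymm hux hxa]

lemma RisingChain.exists_eq_append_cons (hx : ∀ w, w ≤ x ∨ x ≤ w) (hl : RisingChain f l)
    (hu : l.head? = some u) (hv : l.getLast? = some v) (hux : u ≤ x) (hxv : x ≤ v) :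
    ∃ s t, l = s ++ x :: t ∧ (s ++ [x]).head? = some u ∧ RisingChain f (s ++ [x]) ∧
      (x :: t).getLast? = some v ∧ RisingChain f (x :: t) := by
  obtain ⟨s, t, rfl⟩ := List.append_of_mem (hl.1.mem_of_forall_le_or_le hx hu hv hux hxv)
  obtain ⟨hs, ht, -⟩ := risingChain_append_cons.mp hl
  refine ⟨s, t, rfl, ?_, hs, ?_, ht⟩
  · simpa [List.head?_append] using hu
  · simpa [List.getLast?_append] using hv

end RisingChain

section Shelling

variable {L : Type*} [Lattice L] {f f' h : L → L → ℝ} {a b u v x x₁ z : L} {l : List L}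

lemma IsLexShellingOn.congr (hf : IsLexShellingOn a b f)
    (hff' : ∀ p q, a ≤ p → p ⋖ q → q ≤ b → f p q = f' p q) : IsLexShellingOn a b f' := by
  have hrising : ∀ u v l, a ≤ u → v ≤ b → l.head? = some u → l.getLast? = some v →
      (RisingChain f l ↔ RisingChain f' l) := by
    intro u v l hau hvb hu hv
    have hagree : ∀ p q, u ≤ p → p ⋖ q → q ≤ v → f p q = f' p q :=
      fun p q hup hpq hqv => hff' p q (hau.trans hup) hpq (hqv.trans hvb)
    exact ⟨fun hl => hl.of_label_eq_on_Icc hu hv hagree,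
      fun hl => hl.of_label_eq_on_Icc hu hv fun p q hup hpq hqv => (hagree p q hup hpq hqv).symm⟩
  refine ⟨fun u v hau huv hvb => ?_, fun u v hau huv hvb l hu hv hl x₁ hx₁ z huz hzv hne => ?_⟩
  · refine (existsUnique_congr fun l => ?_).mp (hf.1 u v hau huv hvb)
    exact and_congr_right fun hu => and_congr_right fun hv => hrising u v l hau hvb hu hv
  · obtain ⟨t, rfl⟩ := List.head?_eq_some_iff.mp hu
    obtain _ | ⟨y, t⟩ := t
    · simp at hx₁
    obtain rfl : x₁ = y := by simpa using hx₁.symm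
    have hux₁ : u ⋖ x₁ := (List.isChain_cons_cons.mp hl.1).1
    have hx₁v : x₁ ≤ v := (hl.mem_Icc hu hv (by simp)).2
    rw [← hff' u x₁ hau hux₁ (hx₁v.trans hvb), ← hff' u z hau huz (hzv.trans hvb)]
    exact hf.2 u v hau huv hvb _ hu hv ((hrising u v _ hau hvb hu hv).mpr hl) x₁ hx₁ z huz hzv hne

variable [BoundedOrder L]

lemma IsLexShellingOn.existsUnique_risingChain_of_le_of_le (hx : ∀ w, w ≤ x ∨ x ≤ w)
    (h₁ : IsLexShellingOn ⊥ x h) (h₂ : IsLexShellingOn x ⊤ h)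
    (hjoin : ∀ a c, a ⋖ x → x ⋖ c → h a x ≤ h x c) (hux : u ≤ x) (hxv : x ≤ v) :
    ∃! l : List L, l.head? = some u ∧ l.getLast? = some v ∧ RisingChain h l := by
  obtain ⟨_, ⟨hS₁, hS₂, hS⟩, hS_uniq⟩ := h₁.1 u x bot_le hux le_rfl
  obtain ⟨_, ⟨hT₁, hT₂, hT⟩, hT_uniq⟩ := h₂.1 x v le_rfl hxv le_top
  obtain ⟨s, rfl⟩ := List.getLast?_eq_some_iff.mp hS₂
  obtain ⟨t, rfl⟩ := List.head?_eq_some_iff.mp hT₁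
  have hst : RisingChain h (s ++ x :: t) := risingChain_append_cons.mpr ⟨hS, hT,
    fun a ha c hc => hjoin a c ((List.isChain_append.mp hS.1).2.2 a ha x (by simp))
      (hT.1.rel_head? hc)⟩
  refine ⟨s ++ x :: t, ⟨by simpa [List.head?_append] using hS₁,
    by simpa [List.getLast?_append] using hT₂, hst⟩, ?_⟩
  rintro l ⟨hl₁, hl₂, hl⟩
  obtain ⟨s', t', rfl, hs₁, hs, ht₂, ht⟩ := hl.exists_eq_append_cons hx hl₁ hl₂ hux hxv
  obtain rfl : s' = s := by simpa using hS_uniq _ ⟨hs₁, by simp, hs⟩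
  obtain rfl : t' = t := by simpa using hT_uniq _ ⟨by simp, ht₂, ht⟩
  rfl

lemma IsLexShellingOn.label_lt_of_lt_of_le (hx : ∀ w, w ≤ x ∨ x ≤ w)
    (h₁ : IsLexShellingOn ⊥ x h) (hux : u < x) (hxv : x ≤ v) (hl : RisingChain h l)
    (hu : l.head? = some u) (hv : l.getLast? = some v) (hx₁ : l[1]? = some x₁)
    (huz : u ⋖ z) (hne : z ≠ x₁) : h u x₁ < h u z := by
  obtain ⟨s, t, rfl, hs₁, hs, -, -⟩ := hl.exists_eq_append_cons hx hu hv hux.le hxv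
  obtain ⟨a, s, rfl⟩ : ∃ a s', s = a :: s' := by
    rcases s with _ | ⟨a, s⟩
    · exact absurd (by simpa using hs₁) hux.ne'
    · exact ⟨a, s, rfl⟩
  have hzx : z ≤ x := (huz.le_or_le_of_forall_le_or_le hx).resolve_right hux.not_ge
  have hs₁' : (a :: s ++ [x])[1]? = some x₁ := by
    rcases s with _ | ⟨b, s⟩ <;> simpa using hx₁
  exact h₁.2 u x bot_le hux.le le_rfl _ hs₁ List.getLast?_concat hs x₁ hs₁' z huz hzx hne

theorem IsLexShellingOn.glue (hx : ∀ w, w ≤ x ∨ x ≤ w)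
    (h₁ : IsLexShellingOn ⊥ x h) (h₂ : IsLexShellingOn x ⊤ h)
    (hjoin : ∀ a c, a ⋖ x → x ⋖ c → h a x ≤ h x c) : IsLexShellingOn ⊥ ⊤ h := by
  refine ⟨fun u v _ huv _ => ?_, fun u v _ huv _ l hu hv hl x₁ hx₁ z huz hzv hne => ?_⟩
  · by_cases hvx : v ≤ x
    · exact h₁.1 u v bot_le huv hvx
    by_cases hxu : x ≤ u
    · exact h₂.1 u v hxu huv le_top
    exact existsUnique_risingChain_of_le_of_le hx h₁ h₂ hjoin ((hx u).resolve_right hxu)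
      ((hx v).resolve_left hvx)
  · by_cases hvx : v ≤ x
    · exact h₁.2 u v bot_le huv hvx l hu hv hl x₁ hx₁ z huz hzv hne
    by_cases hxu : x ≤ u
    · exact h₂.2 u v hxu huv le_top l hu hv hl x₁ hx₁ z huz hzv hne
    exact h₁.label_lt_of_lt_of_le hx (((hx u).resolve_right hxu).lt_of_not_ge hxu)
      ((hx v).resolve_left hvx) hl hu hv hx₁ huz hne

theorem IsLexShellingOn.glue_ite [DecidableLE L] {f g : L → L → ℝ} (hx : ∀ w, w ≤ x ∨ x ≤ w)
    (hf : IsLexShellingOn ⊥ x f) (hg : IsLexShellingOn x ⊤ g)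
    (hfg : ∀ a c, a ⋖ x → x ⋖ c → f a x ≤ g x c) :
    IsLexShellingOn ⊥ ⊤ fun u v => if v ≤ x then f u v else g u v := by
  refine glue hx (hf.congr fun _ _ _ _ hq => (if_pos hq).symm)
    (hg.congr fun _ _ hxp hpq _ => (if_neg fun hqx => hpq.lt.not_ge (hqx.trans hxp)).symm)
    fun a c hax hxc => ?_
  simpa only [le_refl, if_true, if_neg hxc.lt.not_ge] using hfg a c hax hxc

end Shelling

theorem lexShelling_glue_at_singleton_rank_general
    (L : Type*) [Lattice L] [Finite L] [BoundedOrder L]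
    (r : L → ℕ) (hr : IsRankFunction L r)
    (i : ℕ) (hit : i < r (⊤ : L))
    (x : L) (hx : {v : L | r v = i} = {x})
    (f g : L → L → ℝ)
    (hf : IsLexShellingOn (⊥ : L) x f)
    (hg : IsLexShellingOn x (⊤ : L) g)
    (hfg : ∀ a b c d : L, a ⋖ b → b ≤ x → x ≤ c → c ⋖ d → f a b < g c d) :
    letI : DecidableRel ((· ≤ ·) : L → L → Prop) := Classical.decRel _
    IsLexShellingOn (⊥ : L) (⊤ : L) (fun u v => if v ≤ x then f u v else g u v) ∧
    LexShellable L :=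
  letI : DecidableRel ((· ≤ ·) : L → L → Prop) := Classical.decRel _
  have hglue := IsLexShellingOn.glue_ite (hr.forall_le_or_le hit.le hx) hf hg
    fun a c hax hxc => (hfg a x x c hax le_rfl le_rfl hxc).le
  ⟨hglue, _, hglue⟩

/-- If some intermediate rank set of a finite ranked lattice is
a singleton `{x}`, then lexicographic shellings of `[⊥, x]` and `[x, ⊤]`, the
labels of the latter all strictly greater than the labels of the former, glue
to a lexicographic shelling of `L`; in particular `L` is lexicographically
shellable. -/
theorem lexShelling_glue_at_singleton_rank
    (L : Type*) [Lattice L] [Finite L] [BoundedOrder L]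
    (r : L → ℕ) (hr : IsRankFunction L r)
    (i : ℕ) (hi0 : 0 < i) (hit : i < r (⊤ : L))
    (x : L) (hx : {v : L | r v = i} = {x})
    (f g : L → L → ℝ)
    (hf : IsLexShellingOn (⊥ : L) x f)
    (hg : IsLexShellingOn x (⊤ : L) g)
    (hfg : ∀ a b c d : L, a ⋖ b → b ≤ x → x ≤ c → c ⋖ d → f a b < g c d) :
    letI : DecidableRel ((· ≤ ·) : L → L → Prop) := Classical.decRel _
    IsLexShellingOn (⊥ : L) (⊤ : L) (fun u v => if v ≤ x then f u v else g u v) ∧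
    LexShellable L :=
  lexShelling_glue_at_singleton_rank_general L r hr i hit x hx f g hf hg hfg
end

section
/- Let L be a finite, rank-connected, dismantlable lattice and suppose that for some i with 0 < i < r(⊤) the rank set R_i consists of a single element x. Then the intervals [⊥, x] and [x, ⊤] are each rank-connected and dismantlable lattices. -/
/-!
Since `x` is the only element of rank `i`, every element of rank at most `i` lies below `x` and
every element of rank at least `i` lies above it. Hence each pair of consecutive rank levels of
`[⊥, x]` or of `[x, ⊤]` (ranked by `r` resp. `r - i`) is a pair of consecutive rank levels of `L`,
with the same covering relations, so rank-connectivity passes to both intervals. Dismantlability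
passes to every sublattice: intersecting a dismantling chain of `L` with the sublattice gives
sets whose sizes grow by at most one at each step, and picking, for each size, the first
member of the chain that reaches it gives a dismantling chain of the sublattice.
-/

theorem Set.OrdConnected.coe_covBy_coe {α : Type*} [PartialOrder α] {s : Set α}
    (hs : s.OrdConnected) {u v : s} : (u : α) ⋖ v ↔ u ⋖ v :=
  Set.OrdConnected.apply_covBy_apply_iff (OrderEmbedding.subtype (· ∈ s))
    (by rwa [OrderEmbedding.coe_subtype, Subtype.range_coe])

namespace IsRankFunction

variable {L : Type*} [Lattice L] [Finite L] {r : L → ℕ}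

section OrderBot

variable [OrderBot L]

theorem monotone (hr : IsRankFunction L r) : Monotone r := by
  intro a b hab
  induction b using WellFoundedLT.induction with
  | ind b ih =>
    obtain rfl | hlt := hab.eq_or_lt
    · exact le_rfl
    obtain ⟨c, hac, hcb⟩ := exists_le_covBy_of_lt hlt
    have := ih c hcb.lt hac
    rw [hr.2 c b hcb]
    omega

theorem exists_le_rank_eq (hr : IsRankFunction L r) {v : L} {j : ℕ} (hj : j ≤ r v) :
    ∃ w ≤ v, r w = j := by
  induction v using WellFoundedLT.induction generalizing j with
  | ind v ih =>
    obtain rfl | hlt := hj.eq_or_lt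
    · exact ⟨v, le_rfl, rfl⟩
    have hbot : ⊥ < v := bot_lt_iff_ne_bot.2 fun h => by rw [h, hr.1] at hlt; omega
    obtain ⟨u, -, huv⟩ := exists_le_covBy_of_lt hbot
    obtain ⟨w, hwu, rfl⟩ := ih u huv.lt (j := j) (by rw [hr.2 u v huv] at hlt; omega)
    exact ⟨w, hwu.trans huv.le, rfl⟩

theorem eq_of_isRankFunction (hr : IsRankFunction L r) {r' : L → ℕ}
    (hr' : IsRankFunction L r') : r' = r := by
  funext v
  induction v using WellFoundedLT.induction with
  | ind v ih =>
    obtain rfl | hbot := (bot_le (a := v)).eq_or_lt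
    · rw [hr.1, hr'.1]
    obtain ⟨u, -, huv⟩ := exists_le_covBy_of_lt hbot
    rw [hr.2 u v huv, hr'.2 u v huv, ih u huv.lt]

end OrderBot

variable [BoundedOrder L]

theorem exists_ge_rank_eq (hr : IsRankFunction L r) {v : L} {j : ℕ} (hvj : r v ≤ j)
    (hj : j ≤ r ⊤) : ∃ w, v ≤ w ∧ r w = j := by
  induction v using WellFoundedGT.induction with
  | ind v ih =>
    obtain rfl | hlt := hvj.eq_or_lt
    · exact ⟨v, le_rfl, rfl⟩
    have htop : v < ⊤ := lt_top_iff_ne_top.2 fun h => by rw [h] at hlt; omega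
    obtain ⟨u, hvu, -⟩ := exists_covBy_le_of_lt htop
    obtain ⟨w, huw, rfl⟩ := ih u hvu.lt (by rw [hr.2 v u hvu]; omega)
    exact ⟨w, hvu.le.trans huw, rfl⟩

variable {i : ℕ} {x : L}

theorem le_of_rank_le_of_rank_eq_singleton (hr : IsRankFunction L r)
    (hx : {v : L | r v = i} = {x}) (hi : i ≤ r ⊤) {v : L} (hv : r v ≤ i) : v ≤ x := by
  obtain ⟨w, hvw, hw⟩ := hr.exists_ge_rank_eq hv hi
  rwa [← Set.mem_singleton_iff.1 (hx.subset hw)]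

theorem le_of_le_rank_of_rank_eq_singleton (hr : IsRankFunction L r)
    (hx : {v : L | r v = i} = {x}) {v : L} (hv : i ≤ r v) : x ≤ v := by
  obtain ⟨w, hwv, hw⟩ := hr.exists_le_rank_eq hv
  rwa [← Set.mem_singleton_iff.1 (hx.subset hw)]

end IsRankFunction

section Interval

variable {L : Type*} [Lattice L] {a b : L}

theorem hasseGraph_Icc_connected_iff {S : Set L} (hS : S ⊆ Set.Icc a b) :
    (hasseGraph (Set.Icc a b) (Subtype.val ⁻¹' S)).Connected ↔ (hasseGraph L S).Connected :=
  SimpleGraph.Iso.connected_iff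
    { toFun := fun z => ⟨z.1.1, z.2⟩
      invFun := fun w => ⟨⟨w.1, hS w.2⟩, w.2⟩
      map_rel_iff' := by
        simp only [hasseGraph, Equiv.coe_fn_mk, Set.ordConnected_Icc.coe_covBy_coe, implies_true] }

theorem rankConnected_Icc [Finite L] [BoundedOrder L] [Fact (a ≤ b)] {r : L → ℕ}
    (hr : IsRankFunction L r) (hL : RankConnected L)
    (hsub : ∀ v, r a ≤ r v → r v ≤ r b → v ∈ Set.Icc a b) : RankConnected (Set.Icc a b) := by
  obtain ⟨r', hr', hconn⟩ := hL
  rw [hr.eq_of_isRankFunction hr'] at hconn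
  have hra (z : Set.Icc a b) : r a ≤ r z := hr.monotone z.2.1
  refine ⟨fun z => r z - r a, ⟨Nat.sub_self _, fun u v huv => ?_⟩, fun j hj => ?_⟩
  · have := hr.2 _ _ (Set.ordConnected_Icc.coe_covBy_coe.2 huv)
    have := hra u
    dsimp only
    omega
  · have hj : r a + j < r b := by have : j < r b - r a := hj; omega
    have hlevel : {z : Set.Icc a b | r z - r a = j ∨ r z - r a = j + 1} =
        Subtype.val ⁻¹' {v | r v = r a + j ∨ r v = r a + j + 1} := by
      ext z
      have := hra z
      simp only [Set.mem_ofPred_eq, Set.mem_preimage]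
      omega
    rw [hlevel, hasseGraph_Icc_connected_iff]
    · exact hconn _ (hj.trans_le (hr.monotone le_top))
    · rintro v (hv | hv) <;> exact hsub v (by omega) (by omega)

end Interval

theorem Nat.exists_monotone_rightInverse_of_le_succ {g : ℕ → ℕ}
    (hg : ∀ j, g (j + 1) ≤ g j + 1) (n : ℕ) :
    ∃ φ : ℕ → ℕ, Monotone φ ∧ ∀ k, g 0 ≤ k → k ≤ g n → g (φ k) = k := by
  have hmem (k : ℕ) : min k (g n) ≤ g (sInf {j | min k (g n) ≤ g j}) :=
    Nat.sInf_mem (s := {j | min k (g n) ≤ g j}) ⟨n, show min k (g n) ≤ g n from min_le_right _ _⟩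
  refine ⟨fun k => sInf {j | min k (g n) ≤ g j}, fun k k' hk => ?_, fun k h0 hk => ?_⟩
  · exact Nat.sInf_le ((min_le_min_right _ hk).trans (hmem k'))
  · have hk' := hmem k
    show g (sInf {j | min k (g n) ≤ g j}) = k
    rw [min_eq_left hk] at hk' ⊢
    refine le_antisymm ?_ hk'
    obtain h | h := Nat.eq_zero_or_pos (sInf {j | k ≤ g j})
    · rwa [h]
    · have hprev : g (sInf {j | k ≤ g j} - 1) < k :=
        not_le.1 (Nat.notMem_of_lt_sInf (s := {j | k ≤ g j}) (Nat.sub_one_lt h.ne'))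
      have := hg (sInf {j | k ≤ g j} - 1)
      rw [Nat.sub_add_cancel h] at this
      omega

theorem Set.ncard_preimage_le_add_ncard_sdiff {α β : Type*} [Finite α] {f : β → α}
    (hf : Function.Injective f) (s t : Set α) :
    (f ⁻¹' t).ncard ≤ (f ⁻¹' s).ncard + (t \ s).ncard := by
  have : Finite β := Finite.of_injective f hf
  calc (f ⁻¹' t).ncard ≤ (f ⁻¹' s ∪ f ⁻¹' (t \ s)).ncard :=
        Set.ncard_le_ncard fun v hv => by by_cases h : f v ∈ s <;> simp_all
    _ ≤ (f ⁻¹' s).ncard + (f ⁻¹' (t \ s)).ncard := Set.ncard_union_le _ _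
    _ ≤ (f ⁻¹' s).ncard + (t \ s).ncard := by
        gcongr
        exact Set.ncard_le_ncard_of_injOn f (fun _ h => h) hf.injOn

theorem Dismantlable.of_injective {α β : Type*} [Lattice α] [Finite α] [Lattice β] [Nonempty β]
    (f : LatticeHom β α) (hf : Function.Injective f) (h : Dismantlable α) : Dismantlable β := by
  have : Finite β := Finite.of_injective f hf
  have : Nonempty α := .map f ‹_›
  obtain ⟨C, hC, hmono, htop⟩ := h
  have hN : 1 ≤ Nat.card α := Nat.card_pos
  have hM : 1 ≤ Nat.card β := Nat.card_pos
  have hC_univ {j : ℕ} (hj : Nat.card α ≤ j) : C j = Set.univ :=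
    Set.eq_univ_of_univ_subset (htop ▸ hmono _ _ hj)
  have hC_sublattice {j : ℕ} (hj : 1 ≤ j) : IsSublattice (C j) := by
    rcases le_total j (Nat.card α) with hjN | hNj
    · exact (hC j hj hjN).1
    · exact hC_univ hNj ▸ isSublattice_univ
  -- shifted by one since nothing is known about `C 0`
  set g : ℕ → ℕ := fun j => (f ⁻¹' C (j + 1)).ncard
  have hg0 : g 0 ≤ 1 :=
    (Set.ncard_le_ncard_of_injOn f (fun _ h => h) hf.injOn).trans (hC 1 le_rfl hN).2.le
  have hgN : g (Nat.card α - 1) = Nat.card β := by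
    simp only [g, Nat.sub_add_cancel hN, htop, Set.preimage_univ, Set.ncard_univ]
  have hg (j : ℕ) : g (j + 1) ≤ g j + 1 := by
    show (f ⁻¹' C (j + 2)).ncard ≤ (f ⁻¹' C (j + 1)).ncard + 1
    rcases le_or_gt (j + 2) (Nat.card α) with hj | hj
    · have hdiff := Set.ncard_sdiff_add_ncard_of_subset (hmono (j + 1) (j + 2) (by omega))
      rw [(hC _ (by omega) (by omega)).2, (hC _ (by omega) hj).2] at hdiff
      have := Set.ncard_preimage_le_add_ncard_sdiff hf (C (j + 1)) (C (j + 2))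
      omega
    · rw [hC_univ (show Nat.card α ≤ j + 1 by omega), hC_univ (show Nat.card α ≤ j + 2 by omega)]
      exact Nat.le_succ _
  obtain ⟨φ, hφ, hgφ⟩ := Nat.exists_monotone_rightInverse_of_le_succ hg (Nat.card α - 1)
  refine ⟨fun k => f ⁻¹' C (φ (min k (Nat.card β)) + 1), fun k hk1 hkM => ⟨?_, ?_⟩,
    fun k k' hk => ?_, ?_⟩
  · exact (hC_sublattice (Nat.le_add_left 1 _)).preimage f
  · dsimp only
    rw [min_eq_left hkM]
    exact hgφ k (by omega) (by omega)
  · exact Set.preimage_mono (hmono _ _ (by gcongr; exact hφ (min_le_min_right _ hk)))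
  · by_contra hne
    have hlt := Set.ncard_lt_card hne
    simp only [min_self] at hlt
    exact hlt.ne (hgφ (Nat.card β) (by omega) hgN.ge)

theorem Dismantlable.Icc {L : Type*} [Lattice L] [Finite L] {a b : L} (hab : a ≤ b)
    (h : Dismantlable L) : Dismantlable (Set.Icc a b) :=
  have := Set.nonempty_Icc_subtype hab
  .of_injective { toFun := Subtype.val, map_sup' _ _ := rfl, map_inf' _ _ := rfl }
    Subtype.val_injective h

theorem intervals_rankConnected_dismantlable_at_singleton_rank_general
    (L : Type*) [Lattice L] [Finite L] [BoundedOrder L]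
    (hrc : RankConnected L) (hd : Dismantlable L)
    (r : L → ℕ) (hr : IsRankFunction L r)
    (i : ℕ) (hit : i < r (⊤ : L))
    (x : L) (hx : {v : L | r v = i} = {x}) :
    letI : Fact ((⊥ : L) ≤ x) := ⟨bot_le⟩
    letI : Fact (x ≤ (⊤ : L)) := ⟨le_top⟩
    RankConnected (Set.Icc (⊥ : L) x) ∧ Dismantlable (Set.Icc (⊥ : L) x) ∧
    RankConnected (Set.Icc x (⊤ : L)) ∧ Dismantlable (Set.Icc x (⊤ : L)) := by
  have : Fact ((⊥ : L) ≤ x) := ⟨bot_le⟩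
  have : Fact (x ≤ (⊤ : L)) := ⟨le_top⟩
  have hrx : r x = i := hx.symm.subset rfl
  refine ⟨rankConnected_Icc hr hrc fun v _ hv => ⟨bot_le, ?_⟩,
    hd.Icc bot_le, rankConnected_Icc hr hrc fun v hv _ => ⟨?_, le_top⟩,
    hd.Icc le_top⟩
  · exact hr.le_of_rank_le_of_rank_eq_singleton hx hit.le (hrx ▸ hv)
  · exact hr.le_of_le_rank_of_rank_eq_singleton hx (hrx ▸ hv)

/-- If some intermediate rank set of a finite rank-connected
dismantlable lattice is a singleton `{x}`, then the intervals `[⊥, x]` and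
`[x, ⊤]` are rank-connected and dismantlable lattices. -/
theorem intervals_rankConnected_dismantlable_at_singleton_rank
    (L : Type*) [Lattice L] [Finite L] [BoundedOrder L]
    (hrc : RankConnected L) (hd : Dismantlable L)
    (r : L → ℕ) (hr : IsRankFunction L r)
    (i : ℕ) (hi0 : 0 < i) (hit : i < r (⊤ : L))
    (x : L) (hx : {v : L | r v = i} = {x}) :
    letI : Fact ((⊥ : L) ≤ x) := ⟨bot_le⟩
    letI : Fact (x ≤ (⊤ : L)) := ⟨le_top⟩
    RankConnected (Set.Icc (⊥ : L) x) ∧ Dismantlable (Set.Icc (⊥ : L) x) ∧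
    RankConnected (Set.Icc x (⊤ : L)) ∧ Dismantlable (Set.Icc x (⊤ : L)) :=
  intervals_rankConnected_dismantlable_at_singleton_rank_general L hrc hd r hr i hit x hx
end
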